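/- arXiv:2508.17285 — 2 statements merged into one kernel-verified Lean document; each statement's English description precedes it below -/
import Mathlib

section
/- A canonical collection is complete (an additive system for ℤ) if and only if for every n ∈ ℤ the trajectory of n in the associated canonical system is eventually constant zero, i.e. there exists k with n_i = 0 for all i ≥ k, where n_0 = n and n_{i+1} = f_i(n_i). -/
/-- `prodBases b i = b 0 * b 1 * ⋯ * b (i-1)`. -/
def prodBases (b : ℕ → ℤ) (i : ℕ) : ℤ := ∏ j ∈ Finset.range i, b j

/-- The member sets `A i = (b 0 ⋯ b (i-1)) • T i` of a canonical collection. -/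
def memberSet (b : ℕ → ℤ) (T : ℕ → Set ℤ) (i : ℕ) : Set ℤ :=
  (fun t => prodBases b i * t) '' T i

/-- `T` is a complete residue system modulo `m` containing `0`. -/
def IsCompleteResidueSystem (m : ℤ) (T : Set ℤ) : Prop :=
  0 ∈ T ∧ ∀ r : ℤ, ∃! t, t ∈ T ∧ t ≡ r [ZMOD m]

/-- `a` is a representation of `n` in the collection `A`. -/
def IsRepr (A : ℕ → Set ℤ) (n : ℤ) (a : ℕ → ℤ) : Prop :=
  (∀ i, a i ∈ A i) ∧ (Function.support a).Finite ∧ n = ∑ᶠ i, a i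

lemma prodBases_pos (b : ℕ → ℤ) (hb : ∀ i, 1 < b i) (k : ℕ) : 0 < prodBases b k :=
  Finset.prod_pos fun j _ => lt_trans one_pos (hb j)

lemma prodBases_succ (b : ℕ → ℤ) (k : ℕ) : prodBases b (k + 1) = prodBases b k * b k :=
  Finset.prod_range_succ _ _

lemma prodBases_dvd (b : ℕ → ℤ) {k j : ℕ} (h : k ≤ j) : prodBases b k ∣ prodBases b j :=
  Finset.prod_dvd_prod_of_subset _ _ _ (Finset.range_subset_range.2 h)

/-- A canonical collection is complete (an additive system for `ℤ`) if and only if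
every trajectory of the associated canonical system — `n_0 = n`,
`n_{i+1} = f_i(n_i) = (n_i - t_i(n_i)) / b_i`, where `t_i(n)` is the unique element of
`T i` congruent to `n` modulo `b i` — is eventually constant zero. -/
theorem complete_iff_trajectories_eventually_zero
    (b : ℕ → ℤ) (T : ℕ → Set ℤ)
    (hb : ∀ i, 1 < b i)
    (hT : ∀ i, IsCompleteResidueSystem (b i) (T i))
    (t : ℕ → ℤ → ℤ)
    (ht : ∀ i (n : ℤ), t i n ∈ T i ∧ t i n ≡ n [ZMOD b i])
    (traj : ℤ → ℕ → ℤ)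
    (htraj0 : ∀ n, traj n 0 = n)
    (htrajS : ∀ n i, traj n (i + 1) = (traj n i - t i (traj n i)) / b i) :
    (∀ n : ℤ, ∃! a : ℕ → ℤ, IsRepr (memberSet b T) n a) ↔
      (∀ n : ℤ, ∃ k : ℕ, ∀ i, k ≤ i → traj n i = 0) := by
  -- the trajectory recursion as a multiplication
  have hstep : ∀ (n : ℤ) (i : ℕ), b i * traj n (i + 1) = traj n i - t i (traj n i) := by
    intro n i
    rw [htrajS, mul_comm]
    exact Int.ediv_mul_cancel (ht i (traj n i)).2.dvd
  -- t i 0 = 0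
  have ht0 : ∀ i, t i 0 = 0 := by
    intro i
    obtain ⟨u, _, huniq⟩ := (hT i).2 0
    have h1 := huniq _ ⟨(ht i 0).1, (ht i 0).2⟩
    have h2 := huniq 0 ⟨(hT i).1, Int.ModEq.refl 0⟩
    rw [h1, h2]
  -- telescoping identity
  have htele : ∀ (n : ℤ) (k : ℕ),
      n = (∑ j ∈ Finset.range k, prodBases b j * t j (traj n j))
        + prodBases b k * traj n k := by
    intro n k
    induction k with
    | zero => simp [prodBases, htraj0]
    | succ k ih =>
      rw [Finset.sum_range_succ, prodBases_succ]
      have h := hstep n k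
      calc n = (∑ j ∈ Finset.range k, prodBases b j * t j (traj n j))
            + prodBases b k * traj n k := ih
        _ = _ := by linear_combination (-(prodBases b k)) * h
  -- forced form of any representation
  have hforced : ∀ (n : ℤ) (a : ℕ → ℤ), IsRepr (memberSet b T) n a →
      ∀ k : ℕ, n - ∑ j ∈ Finset.range k, a j = prodBases b k * traj n k ∧
        ∀ j < k, a j = prodBases b j * t j (traj n j) := by
    intro n a ⟨hmem, hfin, hsum⟩
    obtain ⟨N, hN⟩ := Finset.exists_nat_subset_range hfin.toFinset
    have hsupp : Function.support a ⊆ ↑(Finset.range N) := by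
      intro x hx
      exact hN (hfin.mem_toFinset.2 hx)
    have hsumN : ∀ M, N ≤ M → n = ∑ j ∈ Finset.range M, a j := by
      intro M hM
      rw [hsum, finsum_eq_finset_sum_of_support_subset a hsupp]
      exact Finset.sum_subset (Finset.range_subset_range.2 hM) (fun x _ hx => by
        by_contra h
        exact hx (hsupp h))
    have hdvd : ∀ k : ℕ, prodBases b k ∣ (n - ∑ j ∈ Finset.range k, a j) := by
      intro k
      have hM : n = ∑ j ∈ Finset.range (max k N), a j := hsumN _ (le_max_right _ _)
      rw [hM, ← Finset.sum_Ico_eq_sub a (le_max_left k N)]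
      refine Finset.dvd_sum fun j hj => ?_
      obtain ⟨s, _, hs⟩ := hmem j
      exact hs ▸ Dvd.dvd.mul_right (prodBases_dvd b (Finset.mem_Ico.1 hj).1) s
    intro k
    induction k with
    | zero =>
      constructor
      · simp [prodBases, htraj0]
      · omega
    | succ k ih =>
      obtain ⟨hrk, hprev⟩ := ih
      obtain ⟨s, hsT, hs⟩ := hmem k
      have hPpos := prodBases_pos b hb k
      -- b k divides traj n k - s
      have h1 : n - ∑ j ∈ Finset.range (k + 1), a j = prodBases b k * (traj n k - s) := by
        rw [Finset.sum_range_succ, ← hs]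
        linear_combination hrk
      have h2 : prodBases b k * b k ∣ prodBases b k * (traj n k - s) := by
        rw [← prodBases_succ, ← h1]
        exact hdvd (k + 1)
      have h3 : b k ∣ traj n k - s := (mul_dvd_mul_iff_left hPpos.ne').mp h2
      have hse : s = t k (traj n k) := by
        obtain ⟨u, _, huniq⟩ := (hT k).2 (traj n k)
        have hu1 := huniq s ⟨hsT, (Int.modEq_iff_dvd.2 h3).symm.symm⟩
        have hu2 := huniq _ ⟨(ht k (traj n k)).1, (ht k (traj n k)).2⟩
        rw [hu1, hu2]
      have hak : a k = prodBases b k * t k (traj n k) := by rw [← hs, hse]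
      constructor
      · rw [h1, hse, prodBases_succ]
        have h := hstep n k
        linear_combination (-(prodBases b k)) * h
      · intro j hj
        rcases Nat.lt_succ_iff_lt_or_eq.1 hj with h | h
        · exact hprev j h
        · rw [h]; exact hak
  constructor
  · -- completeness → trajectories eventually zero
    intro h n
    obtain ⟨a, ha, -⟩ := h n
    obtain ⟨hmem, hfin, hsum⟩ := ha
    obtain ⟨N, hN⟩ := Finset.exists_nat_subset_range hfin.toFinset
    refine ⟨N, fun i hi => ?_⟩
    have hsupp : Function.support a ⊆ ↑(Finset.range N) := fun x hx =>
      hN (hfin.mem_toFinset.2 hx)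
    have hzero : n - ∑ j ∈ Finset.range i, a j = 0 := by
      rw [hsum, finsum_eq_finset_sum_of_support_subset a hsupp, sub_eq_zero]
      exact Finset.sum_subset (Finset.range_subset_range.2 hi) (fun x _ hx => by
        by_contra hc
        exact hx (hsupp hc))
    have := (hforced n a ⟨hmem, hfin, hsum⟩ i).1
    rw [hzero] at this
    exact (mul_eq_zero.1 this.symm).resolve_left (prodBases_pos b hb i).ne'
  · -- trajectories eventually zero → completeness
    intro h n
    obtain ⟨k, hk⟩ := h n
    set a : ℕ → ℤ := fun i => prodBases b i * t i (traj n i) with ha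
    have hsupp : Function.support a ⊆ ↑(Finset.range k) := by
      intro x hx
      simp only [Finset.coe_range, Set.mem_Iio]
      by_contra hc
      push_neg at hc
      have : a x = 0 := by
        simp only [ha]
        rw [hk x hc, ht0 x, mul_zero]
      exact hx this
    refine ⟨a, ⟨fun i => ⟨t i (traj n i), (ht i (traj n i)).1, rfl⟩,
      Set.Finite.subset (Finset.range k).finite_toSet hsupp, ?_⟩, ?_⟩
    · rw [finsum_eq_finset_sum_of_support_subset a hsupp]
      have := htele n k
      rw [hk k le_rfl, mul_zero, add_zero] at this
      exact this
    · intro a' ha'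
      funext i
      have := (hforced n a' ha' (i + 1)).2 i (Nat.lt_succ_self i)
      rw [this]
end

section
/- Let F be a Fractran program and 𝒜_F the associated Fractran-type canonical collection. For every positive integer n, the trajectory of n in the canonical system of 𝒜_F eventually enters the relevant interval: there exists i such that the i-th trajectory value n_i satisfies 0 ≤ n_i < b_i, where n_0 = n and n_{j+1} = f_j(n_j). -/
/-- One Fractran iteration: on input `n ≥ 1`, multiply by the first fraction in the
program giving an integer; return `0` if there is no such fraction (the program halts)
or if `n = 0`. -/
def fractranStep (F : List ℚ) (n : ℕ) : ℕ :=
  if n = 0 then 0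
  else
    match F.find? (fun q => ((n : ℚ) * q).den == 1) with
    | some q => ((n : ℚ) * q).num.toNat
    | none => 0

/-- The Fractran program `F` halts on input `n`. -/
def FractranHalts (F : List ℚ) (n : ℕ) : Prop :=
  ∃ k : ℕ, (fractranStep F)^[k] n = 0

/-- The base `b = 1 + ⌈max_k F_k⌉` of the Fractran-type canonical collection `𝒜_F`. -/
def bBase (F : List ℚ) : ℤ := 1 + (F.map fun q => ⌈q⌉).foldr max 0

/-- The bases of `𝒜_F`: `b_i = b^(i+1)`. -/
def bF (F : List ℚ) (i : ℕ) : ℤ := bBase F ^ (i + 1)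

/-- The digit maps of `𝒜_F` on `[0, b_i)`: `f_F` except at the exceptional value
`b_i - 1`, which is sent to `1`. -/
def digitF (F : List ℚ) (i : ℕ) (r : ℤ) : ℤ :=
  if r = bF F i - 1 then 1 else (fractranStep F r.toNat : ℤ)

/-- The residue sets of `𝒜_F`: `T_i = {r - b_i · f_i(r) : 0 ≤ r < b_i}`. -/
def TFr (F : List ℚ) (i : ℕ) : Set ℤ :=
  (fun r => r - bF F i * digitF F i r) '' Set.Ico 0 (bF F i)

/-- The canonical system maps of `𝒜_F`: `f_i(n) = (n - t_i(n)) / b_i`, where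
`t_i(n) = r - b_i · f_i(r)` with `r = n mod b_i ∈ [0, b_i)` is the unique element of
`T_i` congruent to `n` modulo `b_i`. -/
def fFr (F : List ℚ) (i : ℕ) (n : ℤ) : ℤ :=
  (n - Int.emod n (bF F i)) / bF F i + digitF F i (Int.emod n (bF F i))

/-- The trajectory of `n` in the canonical system of `𝒜_F`:
`n_0 = n`, `n_{i+1} = f_i(n_i)`. -/
def trajFr (F : List ℚ) (n : ℤ) : ℕ → ℤ
  | 0 => n
  | i + 1 => fFr F i (trajFr F n i)

/-!
Write `b = bBase F ≥ 2` and `b_i = b^(i+1)`. One Fractran step multiplies by a fraction at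
most `b - 1`, so a digit `r < b_i` is sent to at most `(b_i - 1)(b - 1) = b_{i+1} - b_i - b + 1`.
Hence `f_i(m) ≤ m / b_i + b_{i+1} - b_i - b + 1`, which keeps the trajectory of `n ≥ 0` inside
`[0, n + 2 b_i]`; once `b_i > n`, the quotient `n_i / b_i` is at most `2` and `n_{i+1} < b_{i+1}`.
-/

lemma one_le_bBase (F : List ℚ) : 1 ≤ bBase F := by
  have : ∀ l : List ℤ, 0 ≤ l.foldr max 0 := fun l => by
    induction l <;> simp [*]
  unfold bBase
  linarith [this (F.map fun q => ⌈q⌉)]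

lemma ceil_le_bBase_sub_one {F : List ℚ} {q : ℚ} (hq : q ∈ F) : ⌈q⌉ ≤ bBase F - 1 := by
  have := List.le_max_of_le' 0 (List.mem_map_of_mem (f := fun q => ⌈q⌉) hq) le_rfl
  unfold bBase
  linarith

lemma le_bBase_sub_one {F : List ℚ} {q : ℚ} (hq : q ∈ F) : q ≤ ((bBase F - 1 : ℤ) : ℚ) :=
  (Int.le_ceil q).trans (by exact_mod_cast ceil_le_bBase_sub_one hq)

lemma two_le_bBase {F : List ℚ} {q : ℚ} (hq : q ∈ F) (hq₀ : 0 < q) : 2 ≤ bBase F := by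
  linarith [ceil_le_bBase_sub_one hq, Int.ceil_pos.mpr hq₀]

lemma bF_pos (F : List ℚ) (i : ℕ) : 0 < bF F i :=
  pow_pos (by linarith [one_le_bBase F]) _

lemma bF_succ (F : List ℚ) (i : ℕ) : bF F (i + 1) = bF F i * bBase F :=
  pow_succ _ _

lemma bBase_le_bF (F : List ℚ) (i : ℕ) : bBase F ≤ bF F i :=
  le_self_pow₀ (one_le_bBase F) (Nat.succ_ne_zero i)

lemma exists_lt_bF {F : List ℚ} (hb : 2 ≤ bBase F) (n : ℤ) : ∃ i, n < bF F i := by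
  refine ⟨n.toNat, ?_⟩
  have h2 : (n.toNat : ℤ) < 2 ^ (n.toNat + 1) := by
    exact_mod_cast (Nat.lt_two_pow_self).trans (Nat.pow_lt_pow_succ one_lt_two)
  calc n ≤ n.toNat := Int.self_le_toNat n
    _ < 2 ^ (n.toNat + 1) := h2
    _ ≤ bF F n.toNat := pow_le_pow_left₀ (by norm_num) hb _

lemma fractranStep_le (F : List ℚ) (m : ℕ) :
    (fractranStep F m : ℤ) ≤ m * (bBase F - 1) := by
  have hnonneg : (0 : ℤ) ≤ m * (bBase F - 1) :=
    mul_nonneg (Int.natCast_nonneg m) (by linarith [one_le_bBase F])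
  unfold fractranStep
  split
  · simpa using hnonneg
  rcases hfind : F.find? (fun q => ((m : ℚ) * q).den == 1) with _ | q
  · simpa using hnonneg
  have hint : ((((m : ℚ) * q).num : ℤ) : ℚ) = m * q :=
    (Rat.den_eq_one_iff _).mp (by simpa using List.find?_some hfind)
  have hnum : ((m : ℚ) * q).num ≤ m * (bBase F - 1) := by
    have : (m : ℚ) * q ≤ m * ((bBase F - 1 : ℤ) : ℚ) :=
      mul_le_mul_of_nonneg_left (le_bBase_sub_one (List.mem_of_find?_eq_some hfind))
        (Nat.cast_nonneg m)
    exact_mod_cast hint ▸ this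
  simp only [Int.toNat_eq_max]
  exact max_le hnum hnonneg

lemma digitF_nonneg (F : List ℚ) (i : ℕ) (r : ℤ) : 0 ≤ digitF F i r := by
  unfold digitF
  split <;> positivity

lemma digitF_le {F : List ℚ} (hb : 2 ≤ bBase F) (i : ℕ) {r : ℤ} (hr₀ : 0 ≤ r)
    (hr : r < bF F i) : digitF F i r ≤ (bF F i - 1) * (bBase F - 1) := by
  have hbi := bBase_le_bF F i
  unfold digitF
  split
  · nlinarith
  · calc (fractranStep F r.toNat : ℤ) ≤ r.toNat * (bBase F - 1) := fractranStep_le F r.toNat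
      _ = r * (bBase F - 1) := by rw [Int.toNat_of_nonneg hr₀]
      _ ≤ (bF F i - 1) * (bBase F - 1) := by nlinarith

lemma fFr_eq (F : List ℚ) (i : ℕ) (m : ℤ) :
    fFr F i m = m / bF F i + digitF F i (m % bF F i) := by
  have h : m - m % bF F i = bF F i * (m / bF F i) := by
    rw [Int.emod_def]
    ring
  change (m - m % bF F i) / bF F i + digitF F i (m % bF F i) = _
  rw [h, Int.mul_ediv_cancel_left _ (bF_pos F i).ne']

lemma fFr_nonneg (F : List ℚ) (i : ℕ) {m : ℤ} (hm : 0 ≤ m) : 0 ≤ fFr F i m := by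
  rw [fFr_eq]
  have := Int.ediv_nonneg hm (bF_pos F i).le
  linarith [digitF_nonneg F i (m % bF F i)]

lemma fFr_le {F : List ℚ} (hb : 2 ≤ bBase F) (i : ℕ) (m : ℤ) :
    fFr F i m ≤ m / bF F i + bF F (i + 1) - bF F i - bBase F + 1 := by
  have hbi := bF_pos F i
  have := digitF_le hb i (Int.emod_nonneg m hbi.ne') (Int.emod_lt_of_pos m hbi)
  rw [fFr_eq, bF_succ]
  linarith

lemma trajFr_mem_Icc {F : List ℚ} (hb : 2 ≤ bBase F) {n : ℤ} (hn : 0 ≤ n) (i : ℕ) :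
    trajFr F n i ∈ Set.Icc 0 (n + 2 * bF F i) := by
  induction i with
  | zero => exact ⟨hn, show n ≤ _ by linarith [bF_pos F 0]⟩
  | succ i ih =>
    obtain ⟨h₀, h₁⟩ := ih
    have hbi := bF_pos F i
    have hq : trajFr F n i / bF F i ≤ n + 2 :=
      calc trajFr F n i / bF F i ≤ (n + 2 * bF F i) / bF F i := Int.ediv_le_ediv hbi h₁
        _ = n / bF F i + 2 := Int.add_mul_ediv_right _ _ hbi.ne'
        _ ≤ n + 2 := by linarith [Int.ediv_le_self (bF F i) hn]
    exact ⟨fFr_nonneg F i h₀,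
      show fFr F i _ ≤ _ by linarith [fFr_le hb i (trajFr F n i), bF_pos F (i + 1)]⟩

lemma fFr_lt_bF_succ {F : List ℚ} (hb : 2 ≤ bBase F) (i : ℕ) {m : ℤ}
    (hm : m < 3 * bF F i) : fFr F i m < bF F (i + 1) := by
  have hbi := bF_pos F i
  have hq : m / bF F i < 3 := (Int.ediv_lt_iff_lt_mul hbi).mpr (by linarith)
  linarith [fFr_le hb i m, bBase_le_bF F i]

/-- In the canonical system of `𝒜_F`, the trajectory of every positive integer
eventually enters the relevant interval: `0 ≤ n_i < b_i` for some `i`. -/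
theorem trajFr_eventually_enters_interval
    (F : List ℚ) (hne : F ≠ []) (hpos : ∀ q ∈ F, 0 < q)
    (n : ℤ) (hn : 0 < n) :
    ∃ i : ℕ, 0 ≤ trajFr F n i ∧ trajFr F n i < bF F i := by
  obtain ⟨q, hq⟩ := List.exists_mem_of_ne_nil F hne
  have hb : 2 ≤ bBase F := two_le_bBase hq (hpos q hq)
  obtain ⟨i, hi⟩ := exists_lt_bF hb n
  have hle : trajFr F n i ≤ n + 2 * bF F i := (trajFr_mem_Icc hb hn.le i).2
  exact ⟨i + 1, (trajFr_mem_Icc hb hn.le (i + 1)).1, fFr_lt_bF_succ hb i (by linarith)⟩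
end
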